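/- Let (D, g, h) be a winnable Czech hat game, let Y be a clique (any two distinct members of Y have arcs in both directions between them), and let p, q be integers with 0 < q < p. Form the game on Option V by attaching a new vertex x universal to Y with hatness h x = p and guessness g x = q, and replacing, for each v ∈ Y, the hatness h v by h v · p and the guessness g v by g v · (p − q), leaving all other values unchanged. The resulting Czech game is winnable. -/

import Mathlib

/-!
Split the hat of a clique vertex `v` into a pair `(a v, b v)`, with `b v` in `A = ℤ/p`, and let
`S = ∑_{v ∈ Y} b v`. Fix a `q`-subset `Q` of `A`. The new vertex `x`, with hat `z`, guesses
`z ∈ S + Q`. Each `v ∈ Y` sees `z` and every `b u` with `u ∈ Y \ {v}`, so it can list the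
`q` values of `b v` for which `x` would be right; it guesses the old strategy on `a` paired with
the other `p - q` values of `b v`. Either `x` is right, or every `v ∈ Y` is right about `b v` and
the old strategy supplies a vertex that is right about its `a`.
-/

/-- A Czech hat game on the digraph with adjacency `D` (sage `v` sees sage `u`
iff `D v u`), guessness `g`, and hatness `h`, is winnable: there is a strategy
assigning to each sage `v` a set of `g v` guesses, depending only on the hats
she sees, such that for every coloring some sage guesses her own hat color. -/
def HatGame.Winnable {V : Type*} (D : V → V → Prop) (g h : V → ℕ) : Prop :=
  ∃ F : ∀ v : V, (∀ u : V, Fin (h u)) → Finset (Fin (h v)),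
    (∀ (v : V) (c c' : ∀ u : V, Fin (h u)),
        (∀ u : V, D v u → c u = c' u) → F v c = F v c') ∧
    (∀ (v : V) (c : ∀ u : V, Fin (h u)), (F v c).card = g v) ∧
    (∀ c : ∀ u : V, Fin (h u), ∃ v : V, c v ∈ F v c)

open Finset

universe u

namespace HatGame

/-- `Winnable D g h` is definitionally `WinnableWith D g fun v => Fin (h v)`. -/
def WinnableWith {V : Type*} (D : V → V → Prop) (g : V → ℕ) (C : V → Type*) : Prop :=
  ∃ F : ∀ v : V, (∀ u : V, C u) → Finset (C v),
    (∀ (v : V) (c c' : ∀ u : V, C u),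
        (∀ u : V, D v u → c u = c' u) → F v c = F v c') ∧
    (∀ (v : V) (c : ∀ u : V, C u), (F v c).card = g v) ∧
    (∀ c : ∀ u : V, C u, ∃ v : V, c v ∈ F v c)

theorem WinnableWith.of_equiv {V : Type*} {D : V → V → Prop} {g : V → ℕ}
    {C C' : V → Type*} (hw : WinnableWith D g C) (e : ∀ v, C v ≃ C' v) :
    WinnableWith D g C' := by
  obtain ⟨F, hlocal, hcard, hwin⟩ := hw
  refine ⟨fun v c => (F v fun u => (e u).symm (c u)).map (e v).toEmbedding, ?_, ?_, ?_⟩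
  · intro v c c' hcc'
    exact congrArg _ (hlocal v _ _ fun u hu => congrArg _ (hcc' u hu))
  · intro v c
    rw [card_map, hcard]
  · intro c
    obtain ⟨v, hv⟩ := hwin fun u => (e u).symm (c u)
    exact ⟨v, mem_map_equiv.2 hv⟩

def AttachAdj {V : Type*} (D : V → V → Prop) (Y : Set V) : Option V → Option V → Prop
  | none, none => False
  | none, some v => v ∈ Y
  | some v, none => v ∈ Y
  | some u, some v => D u v

abbrev AttachColors {V : Type*} (A : Type u) (C E : V → Type u) : Option V → Type u
  | none => A
  | some v => C v × E v

section AttachToClique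

variable {V : Type*} [Fintype V] [DecidableEq V] (Y : Set V) [DecidablePred (· ∈ Y)]
  {A : Type u} [AddCommGroup A] {C E : V → Type u} (s : ∀ v, E v → A)

def cliqueSum (c : ∀ a, AttachColors A C E a) : A :=
  ∑ u with u ∈ Y, s u (c (some u)).2

def cliqueSumErase (v : V) (c : ∀ a, AttachColors A C E a) : A :=
  ∑ u ∈ ({u | u ∈ Y} : Finset V).erase v, s u (c (some u)).2

variable {Y s}

theorem cliqueSumErase_add {v : V} (hv : v ∈ Y) (c : ∀ a, AttachColors A C E a) :
    cliqueSumErase Y s v c + s v (c (some v)).2 = cliqueSum Y s c :=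
  sum_erase_add _ _ (mem_filter.2 ⟨mem_univ v, hv⟩)

variable (Y s) [Fintype A] [DecidableEq A] [∀ v, Fintype (E v)]

def attachStrategy (F : ∀ v, (∀ u, C u) → Finset (C v)) (Q : Finset A) :
    ∀ a, (∀ b, AttachColors A C E b) → Finset (AttachColors A C E a)
  | none, c => {z | z - cliqueSum Y s c ∈ Q}
  | some v, c => F v (fun u => (c (some u)).1) ×ˢ
      if v ∈ Y then ({b | c none - (cliqueSumErase Y s v c + s v b) ∉ Q} : Finset (E v))
      else univ

variable {Y s}

theorem attachStrategy_congr {D : V → V → Prop} {F : ∀ v, (∀ u, C u) → Finset (C v)}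
    (hF : ∀ v c c', (∀ u, D v u → c u = c' u) → F v c = F v c')
    (hY : ∀ u ∈ Y, ∀ v ∈ Y, u ≠ v → D u v) (Q : Finset A) (a : Option V)
    (c c' : ∀ b, AttachColors A C E b) (hcc' : ∀ b, AttachAdj D Y a b → c b = c' b) :
    attachStrategy Y s F Q a c = attachStrategy Y s F Q a c' := by
  cases a with
  | none =>
    have hS : cliqueSum Y s c = cliqueSum Y s c' :=
      sum_congr rfl fun u hu => by rw [hcc' (some u) (mem_filter.1 hu).2]
    simp only [attachStrategy, hS]
  | some v =>
    have hprimary : F v (fun u => (c (some u)).1) = F v (fun u => (c' (some u)).1) :=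
      hF v _ _ fun u hu => by rw [hcc' (some u) hu]
    by_cases hv : v ∈ Y
    · have hz : c none = c' none := hcc' none hv
      have hS : cliqueSumErase Y s v c = cliqueSumErase Y s v c' :=
        sum_congr rfl fun u hu => by
          obtain ⟨huv, hu⟩ := mem_erase.1 hu
          rw [hcc' (some u) (hY v hv u (mem_filter.1 hu).2 huv.symm)]
      simp only [attachStrategy, if_pos hv, hprimary, hz, hS]
    · simp only [attachStrategy, if_neg hv, hprimary]

theorem card_attachStrategy {g : V → ℕ} {F : ∀ v, (∀ u, C u) → Finset (C v)}
    (hF : ∀ v c, (F v c).card = g v) (hs : ∀ v ∈ Y, (s v).Bijective) (Q : Finset A)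
    (a : Option V) (c : ∀ b, AttachColors A C E b) :
    (attachStrategy Y s F Q a c).card = a.elim Q.card fun v =>
      g v * if v ∈ Y then Fintype.card A - Q.card else Fintype.card (E v) := by
  cases a with
  | none =>
    exact card_bijective _ (Equiv.subRight (cliqueSum Y s c)).bijective (by simp [attachStrategy])
  | some v =>
    rw [attachStrategy, card_product, hF]
    congr 1
    split_ifs with hv
    · have hbij := (@Equiv.subLeft A _ (c none)).bijective.comp
        ((Equiv.addLeft (cliqueSumErase Y s v c)).bijective.comp (hs v hv))
      rw [← card_compl]
      exact card_bijective _ hbij (by simp)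
    · exact card_univ

theorem exists_mem_attachStrategy {F : ∀ v, (∀ u, C u) → Finset (C v)}
    (hF : ∀ c : ∀ u, C u, ∃ v, c v ∈ F v c) (Q : Finset A)
    (c : ∀ b, AttachColors A C E b) :
    ∃ a, c a ∈ attachStrategy Y s F Q a c := by
  by_cases hx : c none - cliqueSum Y s c ∈ Q
  · exact ⟨none, mem_filter.2 ⟨mem_univ _, hx⟩⟩
  obtain ⟨w, hw⟩ := hF fun u => (c (some u)).1
  refine ⟨some w, mem_product.2 ⟨hw, ?_⟩⟩
  by_cases hwY : w ∈ Y
  · rw [if_pos hwY, mem_filter, cliqueSumErase_add hwY]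
    exact ⟨mem_univ _, hx⟩
  · rw [if_neg hwY]
    exact mem_univ _

variable (s) in
theorem WinnableWith.attach_to_clique {D : V → V → Prop} {g : V → ℕ}
    (hw : WinnableWith D g C) (hY : ∀ u ∈ Y, ∀ v ∈ Y, u ≠ v → D u v) (Q : Finset A)
    (hs : ∀ v ∈ Y, (s v).Bijective) :
    WinnableWith (AttachAdj D Y)
      (fun a => a.elim Q.card fun v =>
        g v * if v ∈ Y then Fintype.card A - Q.card else Fintype.card (E v))
      (AttachColors A C E) := by
  obtain ⟨F, hlocal, hcard, hwin⟩ := hw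
  exact ⟨attachStrategy Y s F Q, attachStrategy_congr hlocal hY Q,
    card_attachStrategy hcard hs Q, fun c => exists_mem_attachStrategy hwin Q c⟩

end AttachToClique

end HatGame

theorem czech_attach_to_clique {V : Type*} [Fintype V]
    (D : V → V → Prop)
    (g h : V → ℕ)
    (Y : Set V) [DecidablePred (· ∈ Y)]
    (hclique : ∀ u ∈ Y, ∀ v ∈ Y, u ≠ v → D u v)
    (p q : ℕ) (hpq : q < p)
    (hw : HatGame.Winnable D g h) :
    HatGame.Winnable
      (fun a b : Option V =>
        match a, b with
        | none, some v => v ∈ Y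
        | some v, none => v ∈ Y
        | some u, some v => D u v
        | none, none => False)
      (fun a => a.elim q (fun v => if v ∈ Y then g v * (p - q) else g v))
      (fun a => a.elim p (fun v => if v ∈ Y then h v * p else h v)) := by
  classical
  have : NeZero p := ⟨by omega⟩
  have hk : ∀ v, (if v ∈ Y then p else 1) ≤ p := fun v => by split_ifs <;> omega
  have hs : ∀ v ∈ Y, (Fin.castLE (hk v)).Bijective := fun v hv =>
    (Fintype.bijective_iff_injective_and_card _).2 ⟨Fin.castLE_injective _, by simp [hv]⟩
  let Q : Finset (Fin p) := univ.map (Fin.castLEEmb hpq.le)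
  have e : ∀ v, Fin (h v) × Fin (if v ∈ Y then p else 1) ≃
      Fin (if v ∈ Y then h v * p else h v) := fun v =>
    finProdFinEquiv.trans (finCongr (by rw [mul_ite, mul_one]))
  have key := (HatGame.WinnableWith.attach_to_clique (C := fun v => Fin (h v))
    (fun v => Fin.castLE (hk v)) hw hclique Q hs).of_equiv
      (C' := fun a => Fin (a.elim p fun v => if v ∈ Y then h v * p else h v)) fun a =>
      match a with
      | none => Equiv.refl (Fin p)
      | some v => e v
  convert (show HatGame.Winnable (HatGame.AttachAdj D Y) _ _ from key) using 1
  · funext a b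
    cases a <;> cases b <;> rfl
  · funext a
    cases a with
    | none => simp [Q]
    | some v => by_cases hv : v ∈ Y <;> simp [Q, hv]
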